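/- Let p be a prime and let G be a normal subgroup of a finite group Ḡ whose index [Ḡ:G] is a power of p. If a p-subgroup P ≤ G is p-centric in G and F_p(G)-radical, then there exists a p-subgroup P̄ ≤ Ḡ which is p-centric in Ḡ and F_p(Ḡ)-radical and satisfies P̄ ∩ G = P. -/

import Mathlib

/-- A subgroup `P ≤ G` is `p`-centric in `G` if every element of `p`-power order in the
centralizer `C_G(P)` lies in `P`. -/
def IsPCentric (p : ℕ) {G : Type*} [Group G] (P : Subgroup G) : Prop :=
  ∀ g ∈ Subgroup.centralizer (P : Set G), (∃ n : ℕ, g ^ p ^ n = 1) → g ∈ P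

/-- The subgroup `P ⬝ C_G(P)` of the normalizer `N_G(P)`, i.e. the kernel of
`N_G(P) → Out_G(P)`. -/
def outKer {G : Type*} [Group G] (P : Subgroup G) : Subgroup (Subgroup.normalizer (P : Set G)) :=
  (P ⊔ Subgroup.centralizer (P : Set G)).subgroupOf (Subgroup.normalizer (P : Set G))

instance outKer_normal {G : Type*} [Group G] (P : Subgroup G) : (outKer P).Normal := by
  constructor
  intro n hn g
  rw [outKer, Subgroup.mem_subgroupOf] at hn ⊢
  have key : ∀ x : G, x ∈ (Subgroup.normalizer (P : Set G)) →
      ∀ y ∈ P ⊔ Subgroup.centralizer (P : Set G),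
        x * y * x⁻¹ ∈ P ⊔ Subgroup.centralizer (P : Set G) := by
    intro x hx y hy
    have hPle : P.map (MulAut.conj x).toMonoidHom
        ≤ P ⊔ Subgroup.centralizer (P : Set G) := by
      rintro _ ⟨y, hyP, rfl⟩
      exact Subgroup.mem_sup_left
        (by simpa using (Subgroup.mem_normalizer_iff.mp hx y).mp hyP)
    have hCle : (Subgroup.centralizer (P : Set G)).map (MulAut.conj x).toMonoidHom
        ≤ P ⊔ Subgroup.centralizer (P : Set G) := by
      rintro _ ⟨y, hyC, rfl⟩
      have hyC' : ∀ h ∈ P, h * y = y * h := fun h hh =>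
        Subgroup.mem_centralizer_iff.mp hyC h hh
      refine Subgroup.mem_sup_right (Subgroup.mem_centralizer_iff.mpr ?_)
      intro h hh
      have hh' : x⁻¹ * h * x ∈ P := by
        refine (Subgroup.mem_normalizer_iff.mp hx (x⁻¹ * h * x)).mpr ?_
        have : x * (x⁻¹ * h * x) * x⁻¹ = h := by group
        rw [this]
        exact hh
      have hcomm := hyC' _ hh'
      have : (MulAut.conj x).toMonoidHom y = x * y * x⁻¹ := by
        simp [MulAut.conj_apply]
      rw [this]
      calc h * (x * y * x⁻¹) = x * ((x⁻¹ * h * x) * y) * x⁻¹ := by group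
        _ = x * (y * (x⁻¹ * h * x)) * x⁻¹ := by rw [hcomm]
        _ = x * y * x⁻¹ * h := by group
    have hmap : (P ⊔ Subgroup.centralizer (P : Set G)).map (MulAut.conj x).toMonoidHom
        ≤ P ⊔ Subgroup.centralizer (P : Set G) := by
      rw [Subgroup.map_sup]
      exact sup_le hPle hCle
    have := hmap (Subgroup.mem_map_of_mem _ hy)
    simpa using this
  have := key (g : G) g.2 (n : G) hn
  simpa [mul_assoc] using this

/-- `Out_G(P) = N_G(P) / (P ⬝ C_G(P))`. -/
def OutG {G : Type*} [Group G] (P : Subgroup G) : Type _ :=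
  (Subgroup.normalizer (P : Set G)) ⧸ outKer P

instance {G : Type*} [Group G] (P : Subgroup G) : Group (OutG P) :=
  inferInstanceAs (Group ((Subgroup.normalizer (P : Set G)) ⧸ outKer P))

/-- A subgroup `P ≤ G` is `F_p(G)`-radical if `Out_G(P) = N_G(P)/(P ⬝ C_G(P))` has no
nontrivial normal `p`-subgroup. -/
def IsFpRadical (p : ℕ) {G : Type*} [Group G] (P : Subgroup G) : Prop :=
  ∀ K : Subgroup (OutG P), K.Normal → IsPGroup p K → K = ⊥

/-!
Let `N = N_Gbar(P)`, let `K ≤ N` be the preimage of `O_p(Out_Gbar(P))`, so that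
`P C_Gbar(P) ≤ K ⊴ N`, and take for `Pbar` a Sylow `p`-subgroup of `K` containing `P`.

Since `P C_Gbar(P) ∩ G = P C_G(P)`, the elements of `K ∩ G` are `p`-torsion modulo `P C_G(P)`, so
radicality of `P` in `G` puts them into `P C_G(P)`, where centricity leaves only `P` for the
`p`-elements: `Pbar ∩ G = P`. As `C(Pbar) ≤ C(P) ≤ K` and `Pbar` is Sylow in `K`, `Pbar` is
centric. As `G` is normal, `N(Pbar) ≤ N(Pbar ∩ G) = N`, and by the Frattini argument
`N = N_N(Pbar) K` the image in `N / P C(P)` of the preimage `Q` of `O_p(Out_Gbar(Pbar))` generates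
together with `O_p(Out_Gbar(P))` a normal `p`-subgroup; hence `Q ≤ K`. In `Q` the Sylow subgroup
`Pbar` lies in `Pbar C(Pbar) ⊴ Q`, which has `p`-power index, so `Q = Pbar C(Pbar)`.
-/

open Subgroup

theorem IsPGroup.exists_pow_eq_one_of_mem {p : ℕ} {G : Type*} [Group G] {H : Subgroup G}
    (hH : IsPGroup p H) {x : G} (hx : x ∈ H) : ∃ n : ℕ, x ^ p ^ n = 1 := by
  obtain ⟨n, hn⟩ := hH ⟨x, hx⟩
  exact ⟨n, by simpa using congrArg Subtype.val hn⟩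

theorem IsPGroup.map_of_forall_pow_mem {p : ℕ} {G H : Type*} [Group G] [Group H] (f : G →* H)
    {K Q : Subgroup G} (hK : IsPGroup p (K.map f)) (hQ : ∀ q ∈ Q, ∃ n : ℕ, q ^ p ^ n ∈ K) :
    IsPGroup p (Q.map f) := by
  rintro ⟨_, q, hq, rfl⟩
  obtain ⟨n, hn⟩ := hQ q hq
  obtain ⟨m, hm⟩ := hK.exists_pow_eq_one_of_mem (mem_map_of_mem f hn)
  exact ⟨n + m, Subtype.ext (by simpa [pow_add, pow_mul] using hm)⟩

section PCore

variable (p : ℕ) (G : Type*) [Group G]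

/-- The `p`-core `O_p(G)`. -/
def pCore : Subgroup G :=
  sSup {K : Subgroup G | K.Normal ∧ IsPGroup p K}

instance pCore_normal : (pCore p G).Normal :=
  sSup_normal _ fun _ hK => hK.1

variable {p G}

theorem isPGroup_pCore : IsPGroup p (pCore p G) :=
  Sylow.sSup_of_normal _ (fun _ hK => hK.2) (fun _ hK => hK.1)

theorem le_pCore {K : Subgroup G} (hK : K.Normal) (hKp : IsPGroup p K) : K ≤ pCore p G :=
  le_sSup ⟨hK, hKp⟩

variable (p)

def relPCore (T : Subgroup G) [T.Normal] : Subgroup G :=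
  (pCore p (G ⧸ T)).comap (QuotientGroup.mk' T)

instance relPCore_normal (T : Subgroup G) [T.Normal] : (relPCore p T).Normal :=
  (pCore_normal p _).comap _

theorem le_relPCore (T : Subgroup G) [T.Normal] : T ≤ relPCore p T := fun x hx => by
  rw [relPCore, mem_comap, QuotientGroup.mk'_apply, (QuotientGroup.eq_one_iff x).mpr hx]
  exact one_mem _

variable {p}

theorem relPCore_le_iff {T : Subgroup G} [T.Normal] :
    relPCore p T ≤ T ↔ pCore p (G ⧸ T) = ⊥ := by
  have hT : (⊥ : Subgroup (G ⧸ T)).comap (QuotientGroup.mk' T) = T := by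
    rw [MonoidHom.comap_bot, QuotientGroup.ker_mk']
  calc relPCore p T ≤ T ↔ relPCore p T ≤ (⊥ : Subgroup (G ⧸ T)).comap (QuotientGroup.mk' T) := by
        rw [hT]
    _ ↔ pCore p (G ⧸ T) = ⊥ := by
        rw [relPCore, comap_le_comap_of_surjective (QuotientGroup.mk'_surjective T), le_bot_iff]

theorem exists_pow_mem_of_mem_relPCore {T : Subgroup G} [T.Normal] {x : G}
    (hx : x ∈ relPCore p T) : ∃ n : ℕ, x ^ p ^ n ∈ T := by
  obtain ⟨n, hn⟩ := isPGroup_pCore.exists_pow_eq_one_of_mem hx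
  exact ⟨n, by rwa [← QuotientGroup.eq_one_iff, QuotientGroup.mk_pow]⟩

theorem le_relPCore_of_le_normalizer {T : Subgroup G} [T.Normal]
    {M Q : Subgroup G} (hM : M ⊔ relPCore p T = ⊤) (hMQ : M ≤ normalizer (Q : Set G))
    (hQ : ∀ q ∈ Q, ∃ n : ℕ, q ^ p ^ n ∈ relPCore p T) : Q ≤ relPCore p T := by
  set π := QuotientGroup.mk' T
  set O := pCore p (G ⧸ T)
  have hO : (relPCore p T).map π = O :=
    map_comap_eq_self_of_surjective (QuotientGroup.mk'_surjective T) O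
  have hQp : IsPGroup p (Q.map π) := IsPGroup.map_of_forall_pow_mem π (hO ▸ isPGroup_pCore) hQ
  have hnormal : (O ⊔ Q.map π).Normal := by
    rw [← normalizer_eq_top_iff, eq_top_iff]
    calc ⊤ = (M ⊔ relPCore p T).map π := by
          rw [hM, ← MonoidHom.range_eq_map, MonoidHom.range_eq_top_of_surjective _
            (QuotientGroup.mk'_surjective T)]
      _ = M.map π ⊔ O := by rw [Subgroup.map_sup, hO]
      _ ≤ _ := by
        refine sup_le ((le_inf ?_ ?_).trans (normalizer_inf_normalizer_le_normalizer_sup _ _))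
          (le_sup_left.trans le_normalizer)
        · rw [normalizer_eq_top]; exact le_top
        · exact (map_mono hMQ).trans (le_normalizer_map π)
  have hle := le_pCore hnormal (isPGroup_pCore.to_sup_of_normal_left hQp)
  rw [relPCore, ← map_le_iff_le_comap]
  exact le_sup_right.trans hle

end PCore

section Radical

variable {p : ℕ} {G : Type*} [Group G]

theorem isFpRadical_iff_pCore_eq_bot {P : Subgroup G} :
    IsFpRadical p P ↔ pCore p (OutG P) = ⊥ :=
  ⟨fun hr => hr _ (pCore_normal p _) isPGroup_pCore,
    fun h _ hK hKp => le_bot_iff.mp (h ▸ le_pCore hK hKp)⟩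

theorem isFpRadical_iff_relPCore_le {P : Subgroup G} :
    IsFpRadical p P ↔ relPCore p (outKer P) ≤ outKer P :=
  isFpRadical_iff_pCore_eq_bot.trans relPCore_le_iff.symm

theorem IsPCentric.mem_of_mem_sup_centralizer {P : Subgroup G} (hc : IsPCentric p P)
    (hP : IsPGroup p P) {x : G} (hx : x ∈ P ⊔ centralizer (P : Set G))
    (hxp : ∃ n : ℕ, x ^ p ^ n = 1) : x ∈ P := by
  obtain ⟨u, hu, c, hcC, rfl⟩ : ∃ u ∈ P, ∃ c ∈ centralizer (P : Set G), u * c = x := by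
    rwa [← SetLike.mem_coe, coe_mul_of_right_le_normalizer_left _ _ (centralizer_le_normalizer _),
      Set.mem_mul] at hx
  obtain ⟨a, ha⟩ := hP.exists_pow_eq_one_of_mem hu
  obtain ⟨b, hb⟩ := hxp
  have hcomm : Commute u c := mem_centralizer_iff.mp hcC u hu
  have hcp : c ^ p ^ (a + b) = 1 :=
    calc c ^ p ^ (a + b) = u ^ p ^ (a + b) * c ^ p ^ (a + b) := by
          rw [pow_add, pow_mul u, ha, one_pow, one_mul]
      _ = (u * c) ^ p ^ (a + b) := (hcomm.mul_pow _).symm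
      _ = 1 := by rw [pow_add, mul_comm, pow_mul, hb, one_pow]
  exact mul_mem hu (hc c hcC ⟨a + b, hcp⟩)

variable [Finite G] [Fact p.Prime]

/-- The index `|Q : Q ∩ T|` is a power of `p` dividing `|K : S|`, which is prime to `p`. -/
theorem le_of_forall_pow_mem_of_not_dvd_relIndex {S T Q K : Subgroup G} (hST : S ≤ T)
    (hSQ : S ≤ Q) (hQK : Q ≤ K) (hidx : ¬ p ∣ S.relIndex K) (hQT : Q ≤ normalizer (T : Set G))
    (hQ : ∀ q ∈ Q, ∃ n : ℕ, q ^ p ^ n ∈ T) : Q ≤ T := by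
  have := normal_subgroupOf_of_le_normalizer hQT
  have hquot : IsPGroup p (Q ⧸ T.subgroupOf Q) := by
    intro g
    induction g using QuotientGroup.induction_on with
    | H q =>
      obtain ⟨n, hn⟩ := hQ q q.2
      exact ⟨n, by rw [← QuotientGroup.mk_pow, QuotientGroup.eq_one_iff, mem_subgroupOf]; simpa⟩
  obtain ⟨k, hk⟩ := IsPGroup.iff_card.mp hquot
  have hTQ : T.relIndex Q = p ^ k := by rw [relIndex, index_eq_card, hk]
  have hdvd : p ^ k ∣ S.relIndex K := by
    rw [← relIndex_mul_relIndex S Q K hSQ hQK, ← hTQ]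
    exact dvd_mul_of_dvd_left (relIndex_dvd_of_le_left Q hST) _
  have hcop : Nat.Coprime (p ^ k) (S.relIndex K) :=
    Nat.Coprime.pow_left k ((Nat.Prime.coprime_iff_not_dvd Fact.out).mpr hidx)
  rw [← relIndex_eq_one, hTQ, Nat.Coprime.eq_one_of_dvd hcop hdvd]

theorem isPCentric_of_centralizer_le {S K : Subgroup G} (hS : IsPGroup p S) (hSK : S ≤ K)
    (hidx : ¬ p ∣ S.relIndex K) (hC : centralizer (S : Set G) ≤ K) : IsPCentric p S := by
  intro x hx ⟨n, hn⟩
  have hxS : zpowers x ≤ normalizer (S : Set G) :=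
    zpowers_le.mpr (centralizer_le_normalizer _ hx)
  obtain ⟨m, -, hm⟩ := (Nat.dvd_prime_pow Fact.out).mp (orderOf_dvd_of_pow_eq_one hn)
  have hxp : IsPGroup p (zpowers x) := IsPGroup.of_card (n := m) (by rw [Nat.card_zpowers, hm])
  have hR : IsPGroup p (zpowers x ⊔ S : Subgroup G) := hxp.to_sup_of_normal_right' hS hxS
  have hRS := le_of_forall_pow_mem_of_not_dvd_relIndex le_rfl le_sup_right
    (sup_le (zpowers_le.mpr (hC hx)) hSK) hidx (sup_le hxS le_normalizer)
    fun r hr => (hR.exists_pow_eq_one_of_mem hr).imp fun _ h => by rw [h]; exact one_mem S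
  exact hRS (mem_sup_left (mem_zpowers x))

/-- `hK` is applied to the preimage of `O_p(Out_G(S))`; inside `K`, where `S` is Sylow, that
preimage collapses to `S C_G(S)`. -/
theorem isFpRadical_of_forall_le {S K : Subgroup G} (hidx : ¬ p ∣ S.relIndex K)
    (hK : ∀ Q : Subgroup G, Q ≤ normalizer (S : Set G) →
      normalizer (S : Set G) ≤ normalizer (Q : Set G) →
      (∀ q ∈ Q, ∃ n : ℕ, q ^ p ^ n ∈ S ⊔ centralizer (S : Set G)) → Q ≤ K) :
    IsFpRadical p S := by
  set M := normalizer (S : Set G)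
  set T := S ⊔ centralizer (S : Set G)
  set Q := (relPCore p (outKer S)).map M.subtype
  have hTM : T ≤ M := sup_le le_normalizer (centralizer_le_normalizer _)
  have hT : (outKer S).map M.subtype = T := by
    rw [outKer, subgroupOf_map_subtype, inf_of_le_left hTM]
  have hTQ : T ≤ Q := hT ▸ map_mono (le_relPCore p _)
  have hQ : ∀ q ∈ Q, ∃ n : ℕ, q ^ p ^ n ∈ T := by
    rintro _ ⟨q, hq, rfl⟩
    obtain ⟨n, hn⟩ := exists_pow_mem_of_mem_relPCore hq
    exact ⟨n, hT ▸ mem_map_of_mem M.subtype hn⟩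
  have hMQ : M ≤ normalizer (Q : Set G) := by
    calc M = (normalizer (relPCore p (outKer S) : Set M)).map M.subtype := by
          rw [normalizer_eq_top, ← MonoidHom.range_eq_map, range_subtype]
      _ ≤ normalizer (Q : Set G) := le_normalizer_map _
  have hMT : M ≤ normalizer (T : Set G) :=
    (normal_subgroupOf_iff_le_normalizer hTM).mp (outKer_normal S)
  have hQT : Q ≤ T := le_of_forall_pow_mem_of_not_dvd_relIndex le_sup_left (le_sup_left.trans hTQ)
    (hK Q (map_subtype_le _) hMQ hQ) hidx ((map_subtype_le _).trans hMT) hQ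
  rw [isFpRadical_iff_relPCore_le, ← map_le_map_iff_of_injective M.subtype_injective, hT]
  exact hQT

end Radical

section Sylow

variable {p : ℕ} {G : Type*} [Group G]

theorem exists_sylow_le_normalizer_sup_eq_top [Finite G] [Fact p.Prime] {N : Subgroup G}
    (K : Subgroup N) [K.Normal] {R : Subgroup G} (hR : IsPGroup p R) (hRK : R ≤ K.map N.subtype) :
    ∃ S : Subgroup G, IsPGroup p S ∧ R ≤ S ∧ S ≤ K.map N.subtype ∧
      ¬ p ∣ S.relIndex (K.map N.subtype) ∧ (normalizer (S : Set G)).subgroupOf N ⊔ K = ⊤ := by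
  set f := N.subtype.comp K.subtype
  have hf : Function.Injective f := N.subtype_injective.comp K.subtype_injective
  have hrange : f.range = K.map N.subtype := by
    rw [MonoidHom.range_comp, range_subtype]
  obtain ⟨S, hS⟩ := (hR.comap_of_injective f hf).exists_le_sylow
  have hSN : (S : Subgroup K).map f = ((S : Subgroup K).map K.subtype).map N.subtype :=
    (map_map _ _ _).symm
  refine ⟨(S : Subgroup K).map f, S.isPGroup'.map f, ?_, hrange ▸ map_le_range f _, ?_, ?_⟩
  · rw [← map_comap_eq_self (hRK.trans hrange.ge)]
    exact map_mono hS
  · rw [← hrange, MonoidHom.range_eq_map, relIndex_map_map_of_injective _ _ hf, relIndex_top_right]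
    exact S.not_dvd_index
  · rw [subgroupOf_normalizer_eq (hSN ▸ map_subtype_le _), hSN, subgroupOf,
      comap_map_eq_self_of_injective N.subtype_injective]
    exact Sylow.normalizer_sup_eq_top S

theorem le_map_relPCore_of_le_normalizer {N : Subgroup G} {T : Subgroup N} [T.Normal]
    {M Q : Subgroup G} (hMN : M ≤ N) (hM : M.subgroupOf N ⊔ relPCore p T = ⊤) (hQM : Q ≤ M)
    (hMQ : M ≤ normalizer (Q : Set G))
    (hQ : ∀ q ∈ Q, ∃ n : ℕ, q ^ p ^ n ∈ (relPCore p T).map N.subtype) :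
    Q ≤ (relPCore p T).map N.subtype := by
  have hQN := hQM.trans hMN
  have hQT : Q.subgroupOf N ≤ relPCore p T := by
    refine le_relPCore_of_le_normalizer hM ?_ fun q hq => ?_
    · rw [← subgroupOf_normalizer_eq hQN]
      exact comap_mono hMQ
    · obtain ⟨n, hn⟩ := hQ q hq
      exact ⟨n, (mem_map_iff_mem N.subtype_injective).mp hn⟩
  rw [← inf_of_le_left hQN, ← subgroupOf_map_subtype]
  exact map_mono hQT

end Sylow

section Extension

variable {p : ℕ} {Gbar : Type*} [Group Gbar] {G P : Subgroup Gbar}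

theorem mem_sup_centralizer_subgroupOf_iff (hPG : P ≤ G) {g : G} :
    g ∈ P.subgroupOf G ⊔ centralizer (P.subgroupOf G : Set G) ↔
      (g : Gbar) ∈ P ⊔ centralizer (P : Set Gbar) := by
  constructor
  · intro hg
    have hle : (P.subgroupOf G ⊔ centralizer (P.subgroupOf G : Set G)).map G.subtype ≤
        P ⊔ centralizer (P : Set Gbar) := by
      rw [Subgroup.map_sup, subgroupOf_map_subtype]
      refine sup_le_sup inf_le_left ?_
      rintro _ ⟨c, hc, rfl⟩
      exact mem_centralizer_iff.mpr fun z hz =>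
        congrArg Subtype.val (mem_centralizer_iff.mp hc ⟨z, hPG hz⟩ (mem_subgroupOf.mpr hz))
    exact hle (mem_map_of_mem _ hg)
  · intro hg
    obtain ⟨u, hu, c, hcC, hg⟩ : ∃ u ∈ P, ∃ c ∈ centralizer (P : Set Gbar), u * c = g := by
      rwa [← SetLike.mem_coe, coe_mul_of_right_le_normalizer_left _ _ (centralizer_le_normalizer _),
        Set.mem_mul] at hg
    have hcG : c ∈ G := by simpa [← hg] using mul_mem (inv_mem (hPG hu)) g.2
    have : g = ⟨u, hPG hu⟩ * ⟨c, hcG⟩ := Subtype.ext hg.symm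
    rw [this]
    refine mul_mem_sup (mem_subgroupOf.mpr hu) (mem_centralizer_iff.mpr fun z hz => ?_)
    exact Subtype.ext (mem_centralizer_iff.mp hcC z (mem_subgroupOf.mp hz))

/-- The preimage of `O_p(Out_Gbar(P))` under `N_G(P) → N_Gbar(P)` is normal and `p`-torsion
modulo `P C_G(P)`, so radicality of `P` in `G` puts it inside `P C_G(P)`. -/
theorem IsFpRadical.mem_sup_centralizer_of_mem_map_relPCore (hPG : P ≤ G)
    (hr : IsFpRadical p (P.subgroupOf G)) {g : G}
    (hg : (g : Gbar) ∈ (relPCore p (outKer P)).map (normalizer (P : Set Gbar)).subtype) :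
    g ∈ P.subgroupOf G ⊔ centralizer (P.subgroupOf G : Set G) := by
  have hN : ∀ y : G, y ∈ normalizer (P.subgroupOf G : Set G) ↔
      (y : Gbar) ∈ normalizer (P : Set Gbar) := fun y => by
    rw [← subgroupOf_normalizer_eq hPG, mem_subgroupOf]
  let ρ : normalizer (P.subgroupOf G : Set G) →* normalizer (P : Set Gbar) :=
    (G.subtype.comp (normalizer _).subtype).codRestrict _ fun y => (hN y).mp y.2
  have hρ : (relPCore p (outKer P)).comap ρ ≤ outKer (P.subgroupOf G) := by
    refine le_trans ?_ (isFpRadical_iff_relPCore_le.mp hr)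
    refine le_relPCore_of_le_normalizer (M := ⊤) (top_sup_eq _)
      (normalizer_eq_top_iff.mpr ((relPCore_normal p _).comap ρ)).ge
      fun q hq => ?_
    obtain ⟨n, hn⟩ := exists_pow_mem_of_mem_relPCore hq
    refine ⟨n, le_relPCore p _ ?_⟩
    rw [outKer, mem_subgroupOf] at hn ⊢
    exact (mem_sup_centralizer_subgroupOf_iff hPG).mpr hn
  obtain ⟨x, hx, hxg⟩ := hg
  have hgN : g ∈ normalizer (P.subgroupOf G : Set G) := (hN g).mpr (hxg ▸ x.2)
  have hρg : ρ ⟨g, hgN⟩ = x := Subtype.ext hxg.symm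
  have hy := hρ (mem_comap.mpr (hρg ▸ hx))
  rwa [outKer, mem_subgroupOf] at hy

theorem inf_eq_of_le_map_relPCore (hPG : P ≤ G) (hP : IsPGroup p P)
    (hc : IsPCentric p (P.subgroupOf G)) (hr : IsFpRadical p (P.subgroupOf G))
    {Pbar : Subgroup Gbar} (hPbar : IsPGroup p Pbar) (hPPbar : P ≤ Pbar)
    (hPbarK : Pbar ≤ (relPCore p (outKer P)).map (normalizer (P : Set Gbar)).subtype) :
    Pbar ⊓ G = P := by
  refine le_antisymm (fun x ⟨hxPbar, hxG⟩ => ?_) (le_inf hPPbar hPG)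
  obtain ⟨n, hn⟩ := hPbar.exists_pow_eq_one_of_mem hxPbar
  have hx := hc.mem_of_mem_sup_centralizer hP.comap_subtype
    (hr.mem_sup_centralizer_of_mem_map_relPCore hPG (g := ⟨x, hxG⟩) (hPbarK hxPbar))
    ⟨n, Subtype.ext hn⟩
  exact mem_subgroupOf.mp hx

end Extension

theorem stmt_17_general (p : ℕ) (hp : p.Prime) {Gbar : Type*} [Group Gbar] [Finite Gbar]
    (G : Subgroup Gbar) (hG : G.Normal)
    (P : Subgroup Gbar) (hPG : P ≤ G) (hP : IsPGroup p P)
    (hc : IsPCentric p (P.subgroupOf G)) (hr : IsFpRadical p (P.subgroupOf G)) :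
    ∃ Pbar : Subgroup Gbar, IsPGroup p Pbar ∧ IsPCentric p Pbar ∧ IsFpRadical p Pbar ∧
      Pbar ⊓ G = P := by
  have : Fact p.Prime := ⟨hp⟩
  set K := (relPCore p (outKer P)).map (normalizer (P : Set Gbar)).subtype
  have hPC : P ⊔ centralizer (P : Set Gbar) ≤ K := by
    rw [← inf_of_le_left (sup_le le_normalizer (centralizer_le_normalizer _)),
      ← subgroupOf_map_subtype]
    exact map_mono (le_relPCore p (outKer P))
  obtain ⟨Pbar, hPbar, hPPbar, hPbarK, hidx, hfrattini⟩ :=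
    exists_sylow_le_normalizer_sup_eq_top _ hP (le_sup_left.trans hPC)
  have hPbarG : Pbar ⊓ G = P := inf_eq_of_le_map_relPCore hPG hP hc hr hPbar hPPbar hPbarK
  have hCK : centralizer (Pbar : Set Gbar) ≤ K :=
    (centralizer_le hPPbar).trans (le_sup_right.trans hPC)
  have hNN : normalizer (Pbar : Set Gbar) ≤ normalizer (P : Set Gbar) := by
    rw [← hPbarG]
    exact (le_inf le_rfl (normalizer_eq_top_iff.mpr hG ▸ le_top)).trans
      inf_normalizer_le_normalizer_inf
  refine ⟨Pbar, hPbar, isPCentric_of_centralizer_le hPbar hPbarK hidx hCK,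
    isFpRadical_of_forall_le hidx fun Q hQ hNQ hQT => ?_, hPbarG⟩
  exact le_map_relPCore_of_le_normalizer hNN hfrattini hQ hNQ
    fun q hq => (hQT q hq).imp fun _ hn => sup_le hPbarK hCK hn

theorem stmt_17 (p : ℕ) (hp : p.Prime) {Gbar : Type*} [Group Gbar] [Finite Gbar]
    (G : Subgroup Gbar) (hG : G.Normal) (hidx : ∃ k : ℕ, G.index = p ^ k)
    (P : Subgroup Gbar) (hPG : P ≤ G) (hP : IsPGroup p P)
    (hc : IsPCentric p (P.subgroupOf G)) (hr : IsFpRadical p (P.subgroupOf G)) :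
    ∃ Pbar : Subgroup Gbar, IsPGroup p Pbar ∧ IsPCentric p Pbar ∧ IsFpRadical p Pbar ∧
      Pbar ⊓ G = P :=
  stmt_17_general p hp G hG P hPG hP hc hr
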